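/- arXiv:1205.3604 — 2 statements merged into one kernel-verified Lean document; each statement's English description precedes it below -/
import Mathlib

section
/- For α, β ∈ Q and all m, k ∈ ℤ, the operators X_m(α) and X_k(β) commute: [X_m(α), X_k(β)] = 0 on V(Γ). -/
open MvPolynomial

noncomputable section

/-- Index of a basis of `𝔭 = ℂ ⊗ Γ`: `Sum.inl i ↔ δᵢ`, `Sum.inr i ↔ dᵢ`. -/
abbrev TIdx (N : ℕ) := Fin N ⊕ Fin N

/-- Variables of the symmetric algebra `S(𝔟₋)`: the variable `(x, k)` represents
`x(−k)` (the level-0 variables are inert dummies). -/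
abbrev TVar (N : ℕ) := TIdx N × ℕ

/-- The symmetric algebra `S(𝔟₋)` (containing `S(𝔞₋)` as the subalgebra generated by
the `δ`-variables). -/
abbrev PolyB (N : ℕ) := MvPolynomial (TVar N) ℂ

/-- The lattice `Γ`, an element being recorded by its `δ`-coordinates and
`d`-coordinates. -/
abbrev Gam (N : ℕ) := (Fin N → ℤ) × (Fin N → ℤ)

/-- The Fock space `V(Γ) = ℂ[Γ] ⊗ S(𝔟₋)`: a formal (finitely supported) sum
`Σ_γ e^γ ⊗ u_γ`. -/
abbrev VGam (N : ℕ) := Gam N →₀ PolyB N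

variable {N : ℕ}

/-- The pairing `(γ, α)` for `γ ∈ Γ` and `α ∈ Q` (given by its `δ`-coordinates);
only the `d`-coordinates of `γ` pair non-trivially with `Q`. -/
def pairQ (γ : Gam N) (α : Fin N → ℤ) : ℤ := ∑ i, γ.2 i * α i

/-- The inclusion `Q → Γ`. -/
def incQ (α : Fin N → ℤ) : Gam N := (α, 0)

/-- The pairing on `Γ`. -/
def pairG (γ γ' : Gam N) : ℤ := ∑ i, (γ.1 i * γ'.2 i + γ.2 i * γ'.1 i)

/-- The creation element `α(−j) ∈ S(𝔞₋)` for `α ∈ Q`, as a polynomial. -/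
def Pa (α : Fin N → ℤ) (j : ℕ) : PolyB N := ∑ i, (α i : ℂ) • X (Sum.inl i, j)

/-- The Schur-like coefficients of the creation exponential:
`exp T₋(α,z) = Σ_{p≥0} SpB α p · z^p`, characterized by `S₀ = 1` and
`p·S_p = Σ_{j=1}^p α(−j)·S_{p−j}` (from differentiating the exponential). -/
def SpB (α : Fin N → ℤ) : ℕ → PolyB N
  | 0 => 1
  | p + 1 =>
      ((p : ℂ) + 1)⁻¹ • ∑ j ∈ Finset.range (p + 1), Pa α (j + 1) * SpB α (p - j)
  decreasing_by omega

/-- The annihilation exponential `exp T₊(α,z)` for `α ∈ Q`: since `T₊(α,z)` is a sum of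
derivations sending each variable to a constant, its exponential is the `ℂ`-algebra
endomorphism determined by `δᵢ(−j) ↦ δᵢ(−j)` and `dᵢ(−j) ↦ dᵢ(−j) − αᵢ z^{−j}`,
with values in Laurent polynomials in `z` over `S(𝔟₋)`. -/
def sigmaA (α : Fin N → ℤ) : PolyB N →ₐ[ℂ] AddMonoidAlgebra (PolyB N) ℤ :=
  aeval fun v =>
    AddMonoidAlgebra.single 0 (X v) -
      (match v with
        | (Sum.inl _, _) => 0
        | (Sum.inr i, k) =>
            if k = 0 then 0
            else AddMonoidAlgebra.single (-(k : ℤ)) (C (α i : ℂ)))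

/-- Extraction of the coefficient of `z^c` from `(exp T₋(α,z)) · ℓ`, for a Laurent
polynomial `ℓ` over `S(𝔟₋)` (with the convention `S_p(α) = 0` for `p < 0`). -/
def coefF (α : Fin N → ℤ) (c : ℤ) (ℓ : AddMonoidAlgebra (PolyB N) ℤ) : PolyB N :=
  Finsupp.sum (show ℤ →₀ PolyB N from ℓ.coeff) fun e p =>
    (if 0 ≤ c - e then SpB α ((c - e).toNat) else 0) * p

/-- The component `X_m(α)` of the vertex operator
`X(α,z) = exp T₋(α,z) · e^α · z^{α(0)} · exp T₊(α,z) = Σ_m X_m(α) z^{−m}` acting on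
`V(Γ)`: on `e^γ ⊗ u` it produces `e^{γ+α}` tensored with the `z^{−m−(γ,α)}`-coefficient
of `exp T₋(α,z) · (exp T₊(α,z) u)`. -/
def XopF (α : Fin N → ℤ) (m : ℤ) (v : VGam N) : VGam N :=
  Finsupp.sum v fun γ u =>
    Finsupp.single (γ + incQ α) (coefF α (-m - pairQ γ α) (sigmaA α u))

/-- The action of `b(k)` on `V(Γ)` for `b ∈ 𝔭` (given by its `δ`- and `d`-coordinates):
for `k < 0` multiplication by the creation element `b(k)`, for `k = 0` the scalar
`(γ, b)`, and for `k > 0` the derivation sending `x(−k) ↦ k⟨b,x⟩`. -/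
def popF (b : (Fin N → ℂ) × (Fin N → ℂ)) (k : ℤ) (v : VGam N) : VGam N :=
  Finsupp.sum v fun γ u =>
    Finsupp.single γ
      (if k < 0 then
        (∑ i, (b.1 i • X (Sum.inl i, (-k).toNat)
               + b.2 i • X (Sum.inr i, (-k).toNat))) * u
      else if k = 0 then
        (∑ i, ((γ.1 i : ℂ) * b.2 i + (γ.2 i : ℂ) * b.1 i)) • u
      else
        ∑ i, (((k : ℂ) * b.2 i) • pderiv (Sum.inl i, k.toNat) u
              + ((k : ℂ) * b.1 i) • pderiv (Sum.inr i, k.toNat) u))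

/-- An element `α ∈ Q` viewed as an element of `𝔭`. -/
def toP (α : Fin N → ℤ) : (Fin N → ℂ) × (Fin N → ℂ) := (fun i => (α i : ℂ), 0)

/-! On `e^γ ⊗ u` both composites land in `e^{γ+α+β}`, and since `Q` is isotropic,
`(γ + β, α) = (γ, α)`, so the coefficients extracted by the outer operator do not depend on
the order. The creation coefficients `S_p(β)` involve only the variables `δᵢ(−j)`, which
`exp T₊(α,z)` fixes; hence both composites are the same double coefficient extraction, weighted
by `S(α) S(β)`, of `exp T₊(α,z) exp T₊(β,w) u`. Finally the two annihilation exponentials commute,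
being the substitutions `dᵢ(−j) ↦ dᵢ(−j) − αᵢ z^{−j}` and `dᵢ(−j) ↦ dᵢ(−j) − βᵢ w^{−j}`. -/

section

open AddMonoidAlgebra

variable (α β : Fin N → ℤ)

def schurCoeff (n : ℤ) : PolyB N := if 0 ≤ n then SpB α n.toNat else 0

/-- The variables `δᵢ(−j)`: `supported ℂ deltaVars` is `S(𝔞₋)`. -/
def deltaVars : Set (TVar N) := {v | v.1.isLeft}

lemma Pa_mem_supported (j : ℕ) : Pa α j ∈ supported ℂ deltaVars :=
  Subalgebra.sum_mem _ fun i _ =>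
    Subalgebra.smul_mem _ (X_mem_supported.mpr rfl : X (Sum.inl i, j) ∈ supported ℂ deltaVars) _

lemma SpB_mem_supported (p : ℕ) : SpB α p ∈ supported ℂ deltaVars := by
  induction p using Nat.strong_induction_on with
  | _ p ih =>
    cases p with
    | zero => rw [SpB]; exact Subalgebra.one_mem _
    | succ p =>
      rw [SpB]
      exact Subalgebra.smul_mem _ (Subalgebra.sum_mem _ fun j _ =>
        Subalgebra.mul_mem _ (Pa_mem_supported α _) (ih (p - j) (by omega))) _

lemma sigmaA_X_inl (i : Fin N) (k : ℕ) :
    sigmaA α (X (Sum.inl i, k)) = single 0 (X (Sum.inl i, k)) := by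
  rw [sigmaA, aeval_X, sub_zero]

lemma sigmaA_X_inr (i : Fin N) (k : ℕ) :
    sigmaA α (X (Sum.inr i, k)) =
      single 0 (X (Sum.inr i, k)) - if k = 0 then 0 else single (-(k : ℤ)) (C (α i : ℂ)) := by
  rw [sigmaA, aeval_X]

lemma sigmaA_C (a : ℂ) : sigmaA α (C a) = single 0 (C a) := by
  rw [sigmaA, aeval_C]
  rfl

lemma sigmaA_of_mem_supported {p : PolyB N} (hp : p ∈ supported ℂ deltaVars) :
    sigmaA α p = single 0 p := by
  rw [supported_eq_adjoin_X] at hp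
  suffices h : Algebra.adjoin ℂ (X '' deltaVars) ≤
      AlgHom.equalizer (sigmaA α) singleZeroAlgHom from h hp
  rw [Algebra.adjoin_le_iff]
  rintro _ ⟨⟨i | i, k⟩, hv, rfl⟩
  · exact sigmaA_X_inl α i k
  · exact absurd hv Bool.false_ne_true

lemma sigmaA_schurCoeff (n : ℤ) : sigmaA α (schurCoeff β n) = single 0 (schurCoeff β n) := by
  unfold schurCoeff
  split_ifs
  · exact sigmaA_of_mem_supported α (SpB_mem_supported β _)
  · rw [map_zero, single_zero]

/-- `exp T₊(α,z)` and `exp T₊(β,w)` commute; `commAlgEquiv` swaps the nesting of `z` and `w`. -/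
lemma mapAlgHom_sigmaA_comp_sigmaA :
    (mapAlgHom ℤ (sigmaA α)).comp (sigmaA β) =
      (AddMonoidAlgebra.commAlgEquiv ℂ).toAlgHom.comp
        ((mapAlgHom ℤ (sigmaA β)).comp (sigmaA α)) := by
  refine MvPolynomial.algHom_ext fun v => ?_
  obtain ⟨i | i, k⟩ := v
  · simp only [AlgHom.comp_apply, sigmaA_X_inl, mapAlgHom_single, AlgEquiv.toAlgHom_apply,
      commAlgEquiv_single_single]
  · by_cases hk : k = 0
    · simp only [AlgHom.comp_apply, sigmaA_X_inr, hk, if_true, sub_zero, mapAlgHom_single,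
        AlgEquiv.toAlgHom_apply, commAlgEquiv_single_single]
    · simp only [AlgHom.comp_apply, sigmaA_X_inr, hk, if_false, map_sub, mapAlgHom_single,
        sigmaA_C, AlgEquiv.toAlgHom_apply, commAlgEquiv_single_single, single_sub]
      rw [sub_right_comm]

lemma coefF_zero (c : ℤ) : coefF α c 0 = 0 :=
  Finsupp.sum_zero_index

lemma coefF_add (c : ℤ) (ℓ₁ ℓ₂ : AddMonoidAlgebra (PolyB N) ℤ) :
    coefF α c (ℓ₁ + ℓ₂) = coefF α c ℓ₁ + coefF α c ℓ₂ :=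
  Finsupp.sum_add_index' (fun _ => mul_zero _) fun _ _ _ => mul_add _ _ _

lemma coefF_single (c e : ℤ) (p : PolyB N) :
    coefF α c (single e p) = schurCoeff α (c - e) * p :=
  Finsupp.sum_single_index (mul_zero _)

lemma coefF_single_zero_mul (c : ℤ) (q : PolyB N) (ℓ : AddMonoidAlgebra (PolyB N) ℤ) :
    coefF α c (single 0 q * ℓ) = q * coefF α c ℓ := by
  induction ℓ using AddMonoidAlgebra.induction_linear with
  | zero => rw [mul_zero, coefF_zero, mul_zero]
  | add f g hf hg => rw [mul_add, coefF_add, coefF_add, hf, hg, mul_add]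
  | single e p => rw [single_mul_single, zero_add, coefF_single, coefF_single, mul_left_comm]

def coefFHom (c : ℤ) : AddMonoidAlgebra (PolyB N) ℤ →+ PolyB N where
  toFun := coefF α c
  map_zero' := coefF_zero α c
  map_add' := coefF_add α c

lemma coefFHom_apply (c : ℤ) (ℓ : AddMonoidAlgebra (PolyB N) ℤ) :
    coefFHom α c ℓ = coefF α c ℓ := rfl

lemma coefF_sigmaA_coefF (c₁ c₂ : ℤ) (ℓ : AddMonoidAlgebra (PolyB N) ℤ) :
    coefF α c₁ (sigmaA α (coefF β c₂ ℓ)) =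
      coefF β c₂ (map (coefFHom α c₁) (mapAlgHom ℤ (sigmaA α) ℓ)) := by
  induction ℓ using AddMonoidAlgebra.induction_linear with
  | zero => rw [coefF_zero, map_zero, coefF_zero, map_zero, AddMonoidAlgebra.map_zero, coefF_zero]
  | add f g hf hg =>
    rw [coefF_add, map_add, coefF_add, hf, hg, map_add, AddMonoidAlgebra.map_add, coefF_add]
  | single e p =>
    rw [coefF_single, map_mul, sigmaA_schurCoeff, coefF_single_zero_mul, mapAlgHom_single,
      map_single, coefF_single, coefFHom_apply]

lemma coefF_map_coefFHom_commAlgEquiv (c₁ c₂ : ℤ)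
    (L : AddMonoidAlgebra (AddMonoidAlgebra (PolyB N) ℤ) ℤ) :
    coefF β c₂ (map (coefFHom α c₁) (AddMonoidAlgebra.commAlgEquiv ℂ L)) =
      coefF α c₁ (map (coefFHom β c₂) L) := by
  induction L using AddMonoidAlgebra.induction_linear with
  | zero =>
    rw [map_zero, AddMonoidAlgebra.map_zero, AddMonoidAlgebra.map_zero, coefF_zero, coefF_zero]
  | add f g hf hg =>
    rw [map_add, AddMonoidAlgebra.map_add, AddMonoidAlgebra.map_add, coefF_add, coefF_add, hf, hg]
  | single f ℓ =>
    induction ℓ using AddMonoidAlgebra.induction_linear with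
    | zero =>
      rw [single_zero, map_zero, AddMonoidAlgebra.map_zero, AddMonoidAlgebra.map_zero,
        coefF_zero, coefF_zero]
    | add g h hg hh =>
      rw [single_add, map_add, AddMonoidAlgebra.map_add, AddMonoidAlgebra.map_add, coefF_add,
        coefF_add, hg, hh]
    | single e p =>
      rw [commAlgEquiv_single_single, map_single, map_single, coefFHom_apply, coefFHom_apply,
        coefF_single, coefF_single, coefF_single, coefF_single]
      exact mul_left_comm _ _ _

lemma coefF_sigmaA_comm (c₁ c₂ : ℤ) (u : PolyB N) :
    coefF α c₁ (sigmaA α (coefF β c₂ (sigmaA β u))) =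
      coefF β c₂ (sigmaA β (coefF α c₁ (sigmaA α u))) := by
  have h := DFunLike.congr_fun (mapAlgHom_sigmaA_comp_sigmaA α β) u
  simp only [AlgHom.comp_apply, AlgEquiv.coe_toAlgHom] at h
  rw [coefF_sigmaA_coefF, coefF_sigmaA_coefF, h, coefF_map_coefFHom_commAlgEquiv]

lemma XopF_zero (m : ℤ) : XopF α m 0 = 0 :=
  Finsupp.sum_zero_index

lemma XopF_add (m : ℤ) (v w : VGam N) : XopF α m (v + w) = XopF α m v + XopF α m w :=
  Finsupp.sum_add_index' (fun _ => by rw [map_zero, coefF_zero, Finsupp.single_zero])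
    fun _ _ _ => by rw [map_add, coefF_add, Finsupp.single_add]

lemma XopF_single (m : ℤ) (γ : Gam N) (u : PolyB N) :
    XopF α m (Finsupp.single γ u) =
      Finsupp.single (γ + incQ α) (coefF α (-m - pairQ γ α) (sigmaA α u)) :=
  Finsupp.sum_single_index (by rw [map_zero, coefF_zero, Finsupp.single_zero])

lemma pairQ_add_incQ (γ : Gam N) : pairQ (γ + incQ β) α = pairQ γ α := by
  simp [pairQ, incQ]

end

/-- For `α, β ∈ Q` (so `⟨α,β⟩ = 0`) and all `m, k ∈ ℤ`, the vertex
operator components commute: `[X_m(α), X_k(β)] = 0` on `V(Γ)`. -/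
theorem vertex_components_commute {N : ℕ}
    (α β : Fin N → ℤ) (m k : ℤ) :
    ∀ v : VGam N, XopF α m (XopF β k v) = XopF β k (XopF α m v) := by
  intro v
  induction v using Finsupp.induction_linear with
  | zero => rw [XopF_zero, XopF_zero, XopF_zero]
  | add v w hv hw => rw [XopF_add, XopF_add, XopF_add, XopF_add, hv, hw]
  | single γ u =>
    rw [XopF_single, XopF_single, XopF_single, XopF_single, pairQ_add_incQ, pairQ_add_incQ,
      add_right_comm, coefF_sigmaA_comm]
end
end

section
/- GL(n,ℤ) acts by automorphisms on the toroidal Lie (super)algebra τ̃: for B ∈ GL(n,ℤ), the map defined by B·(X⊗t^m̄) = X⊗t^{B·m̄}, B·(d(t^m̄)t^k̄) = d(t^{B·m̄})t^{B·k̄}, and B·dᵢ = dᵢ' where (d₁',…,d_n') = (Bᵀ)^{−1}(d₁,…,d_n), preserves the Lie bracket of τ̃. -/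
open Matrix

noncomputable section

section TauTilde

variable {io : Type} [Fintype io] [DecidableEq io]

/-- The span of the symbols `t^m̄ Kᵢ`, `i ∈ ι`, `m̄ ∈ ℤⁿ`. -/
abbrev WOm (io : Type) := ((io → ℤ) × io) →₀ ℂ

/-- The subspace `d_A` spanned by the elements `Σᵢ mᵢ t^m̄ Kᵢ`. -/
def relW (io : Type) [Fintype io] : Submodule ℂ (WOm io) :=
  Submodule.span ℂ
    {w : WOm io | ∃ m : io → ℤ, w = ∑ i, (m i : ℂ) • Finsupp.single (m, i) 1}

/-- The space of differentials `Ω_A/d_A`. -/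
abbrev Om (io : Type) [Fintype io] := WOm io ⧸ relW io

/-- The class of `t^m̄ Kᵢ` in `Ω_A/d_A`. -/
def tK (m : io → ℤ) (i : io) : Om io :=
  Submodule.Quotient.mk (Finsupp.single (m, i) 1)

/-- The element `d(t^m̄)·t^k̄ = Σᵢ mᵢ t^{m̄+k̄} Kᵢ` of `Ω_A/d_A`. -/
def dtk (m k : io → ℤ) : Om io :=
  Submodule.Quotient.mk (∑ i, (m i : ℂ) • Finsupp.single (m + k, i) 1)

/-- The full toroidal algebra `τ̃ = g⊗A ⊕ Ω_A/d_A ⊕ D`; the `D`-part records the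
coefficients of the derivations `d₁,…,d_n`. -/
abbrev TauT (io : Type) [Fintype io] (V : Type) [AddCommGroup V] [Module ℂ V] :=
  ((io → ℤ) →₀ V) × Om io × (io → ℂ)

variable {V : Type} [AddCommGroup V] [Module ℂ V]

/-- The action `[Σᵢ cᵢdᵢ, X(m̄)] = (Σᵢ cᵢmᵢ)·X(m̄)` of the derivations on `g ⊗ A`. -/
def dact (d : io → ℂ) (f : (io → ℤ) →₀ V) : (io → ℤ) →₀ V :=
  Finsupp.sum f fun m x => Finsupp.single m ((∑ i, d i * (m i : ℂ)) • x)

/-- The action `[Σᵢcᵢdᵢ, t^l̄ Kⱼ] = (Σᵢcᵢlᵢ)·t^l̄ Kⱼ` of the derivations on `Ω_A`. -/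
def dactW (d : io → ℂ) : WOm io →ₗ[ℂ] WOm io :=
  Finsupp.lsum ℂ fun p => (∑ i, d i * (p.1 i : ℂ)) • Finsupp.lsingle p

/-- The derivation action descends to `Ω_A/d_A`. -/
def dactO (d : io → ℂ) : Om io →ₗ[ℂ] Om io :=
  Submodule.mapQ _ _ (dactW d) (by
    rw [relW, Submodule.span_le]
    rintro w ⟨m, rfl⟩
    have h : (dactW d) (∑ i, (m i : ℂ) • Finsupp.single (m, i) 1)
        = (∑ j, d j * (m j : ℂ)) • ∑ i, (m i : ℂ) • Finsupp.single (m, i) (1 : ℂ) := by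
      rw [map_sum, Finset.smul_sum]
      refine Finset.sum_congr rfl fun i _ => ?_
      simp only [_root_.map_smul, dactW, Finsupp.lsum_single, LinearMap.smul_apply,
        Finsupp.lsingle_apply]
      rw [smul_comm]
    simp only [SetLike.mem_coe, Submodule.mem_comap, h]
    exact Submodule.smul_mem _ _ (Submodule.subset_span ⟨m, rfl⟩))

/-- The toroidal bracket on `τ̃`:
`[X(m̄), Y(k̄)] = [X,Y](m̄+k̄) + (X,Y) Σᵢ mᵢ t^{m̄+k̄}Kᵢ`, `Ω_A/d_A` central in `τ`,
`[dᵢ, X(m̄)] = mᵢ X(m̄)`, `[dᵢ, t^l̄Kⱼ] = lᵢ t^l̄Kⱼ`, `[dᵢ, dⱼ] = 0`. -/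
def brT (br : V →ₗ[ℂ] V →ₗ[ℂ] V) (Bf : V →ₗ[ℂ] V →ₗ[ℂ] ℂ)
    (p q : TauT io V) : TauT io V :=
  ( (Finsupp.sum p.1 fun m x => Finsupp.sum q.1 fun k y => Finsupp.single (m + k) (br x y))
      + dact p.2.2 q.1 - dact q.2.2 p.1,
    (Finsupp.sum p.1 fun m x => Finsupp.sum q.1 fun k y => Bf x y • dtk m k)
      + dactO p.2.2 q.2.1 - dactO q.2.2 p.2.1,
    0 )

/-- The action of `B ∈ GL(n,ℤ)` on `Ω_A`: `t^l̄ Kᵢ ↦ Σⱼ b_{ij} t^{B·l̄} Kⱼ`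
(equivalently `d(t^m̄)t^k̄ ↦ d(t^{B·m̄})t^{B·k̄}`). -/
def PhiW (B : Matrix io io ℤ) : WOm io →ₗ[ℂ] WOm io :=
  Finsupp.lsum ℂ fun p => ∑ j, ((B p.2 j : ℂ)) • Finsupp.lsingle (p.1 ᵥ* B, j)

/-- The `GL(n,ℤ)`-action preserves the relations `Σᵢ mᵢ t^m̄ Kᵢ = 0` and hence
descends to `Ω_A/d_A`. -/
def PhiO (B : Matrix io io ℤ) : Om io →ₗ[ℂ] Om io :=
  Submodule.mapQ _ _ (PhiW B) (by
    rw [relW, Submodule.span_le]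
    rintro w ⟨m, rfl⟩
    have h : (PhiW B) (∑ i, (m i : ℂ) • Finsupp.single (m, i) 1)
        = ∑ j, (((m ᵥ* B) j : ℂ)) • Finsupp.single (m ᵥ* B, j) (1 : ℂ) := by
      rw [map_sum]
      simp only [_root_.map_smul, PhiW, Finsupp.lsum_single, LinearMap.sum_apply,
        LinearMap.smul_apply, Finsupp.lsingle_apply, Finset.smul_sum, smul_smul]
      rw [Finset.sum_comm]
      refine Finset.sum_congr rfl fun j _ => ?_
      rw [← Finset.sum_smul]
      congr 1
      simp only [Matrix.vecMul, dotProduct]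
      push_cast
      try rfl
    simp only [SetLike.mem_coe, Submodule.mem_comap, h]
    exact Submodule.subset_span ⟨m ᵥ* B, rfl⟩)

/-- The action of `B ∈ GL(n,ℤ)` (with inverse `B'`) on `τ̃`:
`X⊗t^m̄ ↦ X⊗t^{B·m̄}`, `d(t^m̄)t^k̄ ↦ d(t^{B·m̄})t^{B·k̄}`, and
`(d₁',…,d_n') = (Bᵀ)^{−1}(d₁,…,d_n)` on the derivations. -/
def PhiT (B B' : Matrix io io ℤ) (p : TauT io V) : TauT io V :=
  ( Finsupp.mapDomain (fun m => m ᵥ* B) p.1,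
    PhiO B p.2.1,
    (B'.map fun z : ℤ => (z : ℂ)) *ᵥ p.2.2 )

end TauTilde

/-!
`B` acts on degrees by the additive map `m̄ ↦ m̄ ᵥ* B`, which transports the loop bracket
and `d(t^m̄)t^k̄` termwise. The coefficients of the derivations transform by `B' = B⁻¹`, so
the eigenvalue `Σᵢ cᵢ mᵢ` of `Σᵢ cᵢ dᵢ` on degree `m̄` is invariant:
`(B' *ᵥ c) ⬝ᵥ (m̄ ᵥ* B) = c ⬝ᵥ m̄`. Hence `Φ_B` commutes with every piece of the bracket.
-/

theorem Matrix.mulVec_dotProduct_vecMul_of_mul_eq_one {ι R : Type*} [Fintype ι] [DecidableEq ι]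
    [CommSemiring R] {B B' : Matrix ι ι R} (h : B * B' = 1) (d m : ι → R) :
    (B' *ᵥ d) ⬝ᵥ (m ᵥ* B) = d ⬝ᵥ m := by
  rw [dotProduct_comm, dotProduct_mulVec, vecMul_vecMul, h, vecMul_one, dotProduct_comm]

theorem Finsupp.mapDomain_sum_single_smul {α β R M : Type*} [Semiring R] [AddCommMonoid M]
    [Module R M] (s : α → β) {c : α → R} {c' : β → R} (hc : ∀ a, c' (s a) = c a)
    (f : α →₀ M) :
    mapDomain s (f.sum fun a x => single a (c a • x))
      = (mapDomain s f).sum fun b x => single b (c' b • x) := by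
  rw [sum_mapDomain_index (by simp) (by simp [smul_add, single_add]), mapDomain_sum]
  simp [mapDomain_single, hc]

theorem Finsupp.sum_sum_mapDomain {α β R M N : Type*} [CommSemiring R] [AddCommMonoid M]
    [Module R M] [AddCommMonoid N] [Module R N] (s : α → β) (p q : α →₀ M)
    (F : β → β → M →ₗ[R] M →ₗ[R] N) :
    ((mapDomain s p).sum fun a x => (mapDomain s q).sum fun b y => F a b x y)
      = p.sum fun a x => q.sum fun b y => F (s a) (s b) x y := by
  rw [sum_mapDomain_index (by simp) (by simp [sum_add])]
  refine sum_congr fun a _ => ?_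
  rw [sum_mapDomain_index (by simp) (by simp)]

section TauTildeAutomorphisms

variable {io : Type} [Fintype io] {V : Type} [AddCommGroup V] [Module ℂ V]

theorem PhiW_sum_smul_single (B : Matrix io io ℤ) (c l : io → ℤ) :
    PhiW B (∑ i, (c i : ℂ) • Finsupp.single (l, i) 1)
      = ∑ j, ((c ᵥ* B) j : ℂ) • Finsupp.single (l ᵥ* B, j) 1 := by
  simp only [map_sum, map_smul, PhiW, Finsupp.lsum_single, LinearMap.sum_apply,
    LinearMap.smul_apply, Finsupp.lsingle_apply, Finset.smul_sum, smul_smul]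
  rw [Finset.sum_comm]
  refine Finset.sum_congr rfl fun j _ => ?_
  rw [← Finset.sum_smul]
  simp [vecMul, dotProduct]

theorem mapDomain_vecMul_loopBracket (B : Matrix io io ℤ) (br : V →ₗ[ℂ] V →ₗ[ℂ] V)
    (p q : (io → ℤ) →₀ V) :
    Finsupp.mapDomain (· ᵥ* B)
        (p.sum fun m x => q.sum fun k y => Finsupp.single (m + k) (br x y))
      = (Finsupp.mapDomain (· ᵥ* B) p).sum fun m x =>
          (Finsupp.mapDomain (· ᵥ* B) q).sum fun k y => Finsupp.single (m + k) (br x y) := by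
  have key := Finsupp.sum_sum_mapDomain (· ᵥ* B) p q fun m k =>
    br.compr₂ (Finsupp.lsingle (m + k))
  simp only [LinearMap.compr₂_apply, Finsupp.lsingle_apply] at key
  rw [key]
  simp [Finsupp.mapDomain_sum, add_vecMul]

theorem PhiO_dtk (B : Matrix io io ℤ) (m k : io → ℤ) :
    PhiO B (dtk m k) = dtk (m ᵥ* B) (k ᵥ* B) := by
  simp only [dtk, PhiO, Submodule.mapQ_apply, PhiW_sum_smul_single, add_vecMul]

theorem PhiO_centralBracket (B : Matrix io io ℤ) (Bf : V →ₗ[ℂ] V →ₗ[ℂ] ℂ)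
    (p q : (io → ℤ) →₀ V) :
    PhiO B (p.sum fun m x => q.sum fun k y => Bf x y • dtk m k)
      = (Finsupp.mapDomain (· ᵥ* B) p).sum fun m x =>
          (Finsupp.mapDomain (· ᵥ* B) q).sum fun k y => Bf x y • dtk m k := by
  have key := Finsupp.sum_sum_mapDomain (· ᵥ* B) p q fun m k =>
    Bf.compr₂ (LinearMap.toSpanSingleton ℂ _ (dtk m k))
  simp only [LinearMap.compr₂_apply, LinearMap.toSpanSingleton_apply] at key
  rw [key]
  simp [map_finsuppSum, PhiO_dtk]

variable [DecidableEq io]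

theorem sum_mulVec_mul_vecMul_intCast {B B' : Matrix io io ℤ} (h : B * B' = 1) (d : io → ℂ)
    (m : io → ℤ) :
    ∑ j, (B'.map ((↑) : ℤ → ℂ) *ᵥ d) j * ((m ᵥ* B) j : ℂ) = ∑ i, d i * (m i : ℂ) := by
  have hcast : (fun j => ((m ᵥ* B) j : ℂ)) = (fun i => (m i : ℂ)) ᵥ* B.map ((↑) : ℤ → ℂ) :=
    funext (RingHom.map_vecMul (Int.castRingHom ℂ) B m)
  have hmap : B.map ((↑) : ℤ → ℂ) * B'.map ((↑) : ℤ → ℂ) = 1 := by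
    have := congrArg (Int.castRingHom ℂ).mapMatrix h
    rwa [map_mul, map_one] at this
  exact (congrArg _ hcast).trans (mulVec_dotProduct_vecMul_of_mul_eq_one hmap d _)

theorem dact_mapDomain_vecMul {B B' : Matrix io io ℤ} (h : B * B' = 1) (d : io → ℂ)
    (f : (io → ℤ) →₀ V) :
    Finsupp.mapDomain (· ᵥ* B) (dact d f)
      = dact (B'.map ((↑) : ℤ → ℂ) *ᵥ d) (Finsupp.mapDomain (· ᵥ* B) f) :=
  Finsupp.mapDomain_sum_single_smul (· ᵥ* B) (sum_mulVec_mul_vecMul_intCast h d) f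

theorem PhiW_comp_dactW {B B' : Matrix io io ℤ} (h : B * B' = 1) (d : io → ℂ) :
    (PhiW B).comp (dactW d) = (dactW (B'.map ((↑) : ℤ → ℂ) *ᵥ d)).comp (PhiW B) := by
  refine Finsupp.lhom_ext fun p c => ?_
  simp only [LinearMap.comp_apply, dactW, PhiW, Finsupp.lsum_single, LinearMap.smul_apply,
    LinearMap.sum_apply, Finsupp.lsingle_apply, map_smul, map_sum, Finset.smul_sum,
    sum_mulVec_mul_vecMul_intCast h d p.1]
  exact Finset.sum_congr rfl fun j _ => smul_comm _ _ _

theorem PhiO_dactO {B B' : Matrix io io ℤ} (h : B * B' = 1) (d : io → ℂ) (w : Om io) :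
    PhiO B (dactO d w) = dactO (B'.map ((↑) : ℤ → ℂ) *ᵥ d) (PhiO B w) := by
  obtain ⟨w, rfl⟩ := Submodule.Quotient.mk_surjective _ w
  simp only [dactO, PhiO, Submodule.mapQ_apply, ← LinearMap.comp_apply, PhiW_comp_dactW h d]
end TauTildeAutomorphisms

theorem GL_acts_by_automorphisms_general
    (io : Type) [Fintype io] [DecidableEq io]
    (V : Type) [AddCommGroup V] [Module ℂ V]
    (br : V →ₗ[ℂ] V →ₗ[ℂ] V) (Bf : V →ₗ[ℂ] V →ₗ[ℂ] ℂ)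
    (B B' : Matrix io io ℤ) (hBB' : B * B' = 1) :
    ∀ p q : TauT io V,
      PhiT B B' (brT br Bf p q) = brT br Bf (PhiT B B' p) (PhiT B B' q) := by
  intro p q
  refine Prod.ext ?_ (Prod.ext ?_ ?_)
  · simp only [PhiT, brT, Finsupp.mapDomain_sub, Finsupp.mapDomain_add,
      mapDomain_vecMul_loopBracket, dact_mapDomain_vecMul hBB']
  · simp only [PhiT, brT, map_sub, map_add, PhiO_centralBracket, PhiO_dactO hBB']
  · exact mulVec_zero _

/-- `GL(n,ℤ)` acts by automorphisms on the toroidal Lie (super)algebra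
`τ̃`: for `B ∈ GL(n,ℤ)` (encoded by a pair of mutually inverse integer matrices
`B, B'`), the map `Φ_B` defined by `B·(X⊗t^m̄) = X⊗t^{B·m̄}`,
`B·(d(t^m̄)t^k̄) = d(t^{B·m̄})t^{B·k̄}` (which preserves the relations
`Σᵢ mᵢ t^m̄ Kᵢ = 0`, as checked in the definition of `PhiO`), and
`B·dᵢ = dᵢ'` with `(d₁',…,d_n') = (Bᵀ)^{−1}(d₁,…,d_n)`, preserves the Lie bracket
of `τ̃`. -/
theorem GL_acts_by_automorphisms
    (io : Type) [Fintype io] [DecidableEq io]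
    (V : Type) [AddCommGroup V] [Module ℂ V]
    (br : V →ₗ[ℂ] V →ₗ[ℂ] V) (Bf : V →ₗ[ℂ] V →ₗ[ℂ] ℂ)
    (B B' : Matrix io io ℤ) (hBB' : B * B' = 1) (hB'B : B' * B = 1) :
    ∀ p q : TauT io V,
      PhiT B B' (brT br Bf p q) = brT br Bf (PhiT B B' p) (PhiT B B' q) :=
  GL_acts_by_automorphisms_general io V br Bf B B' hBB'
end
end
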